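/- arXiv:1602.04728 — 2 statements merged into one kernel-verified Lean document; each statement's English description precedes it below -/
import Mathlib

section
/- Let n ≥ 1, M ≥ 0, and let H : ℝⁿ → ℝ be convex with H(0) = 0 and |p|² ≤ H(p) ≤ |p|² + M|p| for all p ∈ ℝⁿ, and assume H is radially strictly convex. For A ≥ 1 define H_A(q) := A²·H(q/A). Then for every θ > 0 there exists μ > 0 such that for every A ≥ 1, every p ∈ ℝⁿ with |p| ≥ θA, and every subgradient q of H_A at p, one has q·p ≥ H_A(p) + μA². -/
/-!
Testing the subgradient inequality at `p / 2` gives `⟪q, p⟫ ≥ H p + D p` with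
`D p := H p - 2 H (p / 2)`, and the rescaling `x ↦ x / A` reduces everything to `A = 1`.
Convexity gives `D ≥ 0`; if `D p = 0` while `H p > 0`, a convex function agreeing with its chord
at the midpoint of `[0, p]` agrees with it on the whole segment, which radial strict convexity
forbids. Hence `D` has a positive minimum on the compact annulus `θ ≤ ‖p‖ ≤ 2M + 2`, and beyond
it the quadratic bounds give `D p ≥ ‖p‖ (‖p‖ / 2 - M) ≥ 1`.
-/

open scoped RealInnerProductSpace

/-- `q` is a subgradient of `F` at `p`. -/
def IsSubgradient {n : ℕ} (F : EuclideanSpace ℝ (Fin n) → ℝ)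
    (p q : EuclideanSpace ℝ (Fin n)) : Prop :=
  ∀ y, F y ≥ F p + ⟪q, y - p⟫

/-- `H` is radially strictly convex: whenever `H` is affine on a segment `[p₁, p₂]`
with `H(p₂) > 0`, it is constant on that segment. -/
def RadStrictConvex {n : ℕ} (H : EuclideanSpace ℝ (Fin n) → ℝ) : Prop :=
  ∀ p₁ p₂ : EuclideanSpace ℝ (Fin n),
    (∀ s ∈ Set.Icc (0:ℝ) 1,
      H ((1 - s) • p₁ + s • p₂) = (1 - s) * H p₁ + s * H p₂) →
    0 < H p₂ →
    ∀ s ∈ Set.Icc (0:ℝ) 1, H ((1 - s) • p₁ + s • p₂) = H p₂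

open Set

theorem ConvexOn.eq_mul_of_map_half {f : ℝ → ℝ} (hf : ConvexOn ℝ (Icc 0 1) f) (h0 : f 0 = 0)
    (hhalf : f 2⁻¹ = 2⁻¹ * f 1) {s : ℝ} (hs : s ∈ Icc 0 1) : f s = s * f 1 := by
  have h0mem : (0 : ℝ) ∈ Icc 0 1 := left_mem_Icc.2 zero_le_one
  have h1mem : (1 : ℝ) ∈ Icc 0 1 := right_mem_Icc.2 zero_le_one
  apply le_antisymm
  · simpa [h0] using hf.2 h1mem h0mem hs.1 (sub_nonneg.2 hs.2) (add_sub_cancel s 1)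
  · rcases lt_trichotomy s 2⁻¹ with hs' | rfl | hs'
    · nlinarith [hf.secant_mono_aux1 hs h1mem hs' (by norm_num)]
    · exact hhalf.ge
    · nlinarith [hf.secant_mono_aux1 h0mem hs (by norm_num) hs']

theorem ConvexOn.map_smul_eq_of_map_half_smul {E : Type*} [AddCommGroup E] [Module ℝ E]
    {H : E → ℝ} (hH : ConvexOn ℝ univ H) (h0 : H 0 = 0) {p : E}
    (hhalf : H ((2⁻¹ : ℝ) • p) = 2⁻¹ * H p) {s : ℝ} (hs : s ∈ Icc 0 1) :
    H (s • p) = s * H p := by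
  have hline : ConvexOn ℝ univ fun t : ℝ => H (t • p) :=
    hH.comp_linearMap (LinearMap.id.smulRight p)
  simpa using (hline.subset (subset_univ _) (convex_Icc 0 1)).eq_mul_of_map_half
    (by simpa using h0) (by simpa using hhalf) hs

theorem RadStrictConvex.two_mul_map_half_smul_lt {n : ℕ} {H : EuclideanSpace ℝ (Fin n) → ℝ}
    (hrad : RadStrictConvex H) (hconv : ConvexOn ℝ univ H) (h0 : H 0 = 0)
    {p : EuclideanSpace ℝ (Fin n)} (hp : 0 < H p) :
    2 * H ((2⁻¹ : ℝ) • p) < H p := by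
  have hle : H ((2⁻¹ : ℝ) • p) ≤ 2⁻¹ * H p := by
    simpa [h0] using hconv.2 (mem_univ p) (mem_univ 0) (by norm_num : (0 : ℝ) ≤ 2⁻¹)
      (by norm_num : (0 : ℝ) ≤ 2⁻¹) (by norm_num)
  refine lt_of_le_of_ne (by linarith) fun heq => ?_
  have haffine : ∀ s ∈ Icc (0 : ℝ) 1,
      H ((1 - s) • 0 + s • p) = (1 - s) * H 0 + s * H p := by
    intro s hs
    simp [h0, hconv.map_smul_eq_of_map_half_smul h0 (p := p) (by linarith) hs]
  have hconst := hrad 0 p haffine hp 0 (left_mem_Icc.2 zero_le_one)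
  simp only [sub_zero, one_smul, zero_smul, add_zero, h0] at hconst
  exact hp.ne hconst

theorem exists_pos_le_sub_two_mul_map_half_smul {n : ℕ} {M : ℝ} (hM : 0 ≤ M)
    {H : EuclideanSpace ℝ (Fin n) → ℝ} (hconv : ConvexOn ℝ univ H) (h0 : H 0 = 0)
    (hbounds : ∀ p, ‖p‖ ^ 2 ≤ H p ∧ H p ≤ ‖p‖ ^ 2 + M * ‖p‖)
    (hrad : RadStrictConvex H) {θ : ℝ} (hθ : 0 < θ) :
    ∃ μ > 0, ∀ p, θ ≤ ‖p‖ → μ ≤ H p - 2 * H ((2⁻¹ : ℝ) • p) := by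
  have hcont : Continuous fun p => H p - 2 * H ((2⁻¹ : ℝ) • p) := by
    have := hconv.locallyLipschitz.continuous
    fun_prop
  set R := 2 * M + 2
  have hK : IsCompact (Metric.closedBall 0 R ∩ {p : EuclideanSpace ℝ (Fin n) | θ ≤ ‖p‖}) :=
    (isCompact_closedBall 0 R).inter_right (isClosed_le continuous_const continuous_norm)
  obtain ⟨μ, hμ, hμK⟩ := hK.exists_forall_le' hcont.continuousOn fun p hp =>
    have hθp : θ ≤ ‖p‖ := hp.2
    sub_pos.2 (hrad.two_mul_map_half_smul_lt hconv h0 (by nlinarith [(hbounds p).1]))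
  refine ⟨min μ 1, lt_min hμ one_pos, fun p hp => ?_⟩
  by_cases hpR : ‖p‖ ≤ R
  · exact (min_le_left _ _).trans (hμK p ⟨mem_closedBall_zero_iff.2 hpR, hp⟩)
  · have hhalf := (hbounds ((2⁻¹ : ℝ) • p)).2
    rw [norm_smul, Real.norm_of_nonneg (by norm_num)] at hhalf
    nlinarith [(hbounds p).1, norm_nonneg p, min_le_right μ 1]

theorem IsSubgradient.of_rescale {n : ℕ} {H : EuclideanSpace ℝ (Fin n) → ℝ} {A : ℝ}
    (hA : A ≠ 0) {p q : EuclideanSpace ℝ (Fin n)}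
    (hq : IsSubgradient (fun x => A ^ 2 * H (A⁻¹ • x)) p q) :
    IsSubgradient H (A⁻¹ • p) (A⁻¹ • q) := by
  intro y
  have h : A ^ 2 * H (A⁻¹ • A • y) ≥ A ^ 2 * H (A⁻¹ • p) + ⟪q, A • y - p⟫ := hq (A • y)
  have hy : A • y - p = A • (y - A⁻¹ • p) := by
    rw [smul_sub, smul_inv_smul₀ hA]
  rw [inv_smul_smul₀ hA, hy, real_inner_smul_right] at h
  rw [real_inner_smul_left]
  have hA2 : 0 < A ^ 2 := by positivity
  refine le_of_mul_le_mul_left ?_ hA2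
  calc A ^ 2 * (H (A⁻¹ • p) + A⁻¹ * ⟪q, y - A⁻¹ • p⟫)
      = A ^ 2 * H (A⁻¹ • p) + A * ⟪q, y - A⁻¹ • p⟫ := by field_simp
    _ ≤ A ^ 2 * H y := h

theorem IsSubgradient.two_mul_sub_map_half_smul_le_inner {n : ℕ}
    {H : EuclideanSpace ℝ (Fin n) → ℝ} {p q : EuclideanSpace ℝ (Fin n)}
    (hq : IsSubgradient H p q) : 2 * (H p - H ((2⁻¹ : ℝ) • p)) ≤ ⟪q, p⟫ := by
  have h := hq ((2⁻¹ : ℝ) • p)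
  rw [show (2⁻¹ : ℝ) • p - p = (-2⁻¹ : ℝ) • p by module, real_inner_smul_right] at h
  linarith

theorem statement18_general {n : ℕ} (M : ℝ) (hM : 0 ≤ M)
    (H : EuclideanSpace ℝ (Fin n) → ℝ) (hconv : ConvexOn ℝ Set.univ H)
    (h0 : H 0 = 0)
    (hbounds : ∀ p, ‖p‖ ^ 2 ≤ H p ∧ H p ≤ ‖p‖ ^ 2 + M * ‖p‖)
    (hrad : RadStrictConvex H) :
    ∀ θ > (0:ℝ), ∃ μ > (0:ℝ), ∀ A : ℝ, 1 ≤ A →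
      ∀ p : EuclideanSpace ℝ (Fin n), ‖p‖ ≥ θ * A →
      ∀ q, IsSubgradient (fun x => A ^ 2 * H (A⁻¹ • x)) p q →
        ⟪q, p⟫ ≥ A ^ 2 * H (A⁻¹ • p) + μ * A ^ 2 := by
  intro θ hθ
  obtain ⟨μ, hμ, hgap⟩ := exists_pos_le_sub_two_mul_map_half_smul hM hconv h0 hbounds hrad hθ
  refine ⟨μ, hμ, fun A hA p hp q hq => ?_⟩
  have hA0 : 0 < A := by linarith
  have hnorm : θ ≤ ‖A⁻¹ • p‖ := by
    rw [norm_smul, norm_inv, Real.norm_of_nonneg hA0.le, inv_mul_eq_div, le_div_iff₀ hA0]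
    exact hp
  have hinner := (hq.of_rescale hA0.ne').two_mul_sub_map_half_smul_le_inner
  have hgap' := hgap _ hnorm
  calc A ^ 2 * H (A⁻¹ • p) + μ * A ^ 2 = A ^ 2 * (H (A⁻¹ • p) + μ) := by ring
    _ ≤ A ^ 2 * ⟪A⁻¹ • q, A⁻¹ • p⟫ := by gcongr; linarith
    _ = ⟪q, p⟫ := by
      rw [real_inner_smul_left, real_inner_smul_right]
      field_simp

/-- Let `H` be convex with `H(0) = 0`, `|p|² ≤ H(p) ≤ |p|² + M|p|`,
radially strictly convex, and for `A ≥ 1` set `H_A(q) = A² H(q/A)`.  Then for every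
`θ > 0` there is `μ > 0` such that `q·p ≥ H_A(p) + μ A²` whenever `A ≥ 1`,
`|p| ≥ θ A`, and `q` is a subgradient of `H_A` at `p`. -/
theorem statement18 {n : ℕ} (hn : 1 ≤ n) (M : ℝ) (hM : 0 ≤ M)
    (H : EuclideanSpace ℝ (Fin n) → ℝ) (hconv : ConvexOn ℝ Set.univ H)
    (h0 : H 0 = 0)
    (hbounds : ∀ p, ‖p‖ ^ 2 ≤ H p ∧ H p ≤ ‖p‖ ^ 2 + M * ‖p‖)
    (hrad : RadStrictConvex H) :
    ∀ θ > (0:ℝ), ∃ μ > (0:ℝ), ∀ A : ℝ, 1 ≤ A →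
      ∀ p : EuclideanSpace ℝ (Fin n), ‖p‖ ≥ θ * A →
      ∀ q, IsSubgradient (fun x => A ^ 2 * H (A⁻¹ • x)) p q →
        ⟪q, p⟫ ≥ A ^ 2 * H (A⁻¹ • p) + μ * A ^ 2 :=
  statement18_general M hM H hconv h0 hbounds hrad
end

section
/- Let n ≥ 1, M ≥ 0, and let H : ℝⁿ → ℝ be convex with H(0) = 0 and |p|² ≤ H(p) ≤ |p|² + M|p| for all p ∈ ℝⁿ, and assume H is radially strictly convex. For A ≥ 1 define H_A(q) := A²·H(q/A), and for each unit vector p ∈ ℝⁿ let λ_{p,A} > 0 be the unique minimizer of λ ↦ (1 + H_A(λp))/λ over λ > 0. Then lim_{A→∞} sup_{|p|=1} λ_{p,A}/A = 0 and lim_{A→∞} sup_{|p|=1} H_A(λ_{p,A} p)/A² = 0. -/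
/-!
Write `μ = λ / A`, so that `λ_{p,A}/A` minimizes `μ ↦ (1 + A² H(μp)) / μ`. Radial strict
convexity makes the gap `H(dp) - 2 H(dp/2)` positive, and by compactness of the unit sphere it is
at least some `ε > 0` uniformly in `p`. Since `t ↦ H(tp)/t` is nondecreasing, every `μ ≥ d` has
quotient larger than `A² H(dp)/d`, which is at least the value `(2 + 2A² H(dp/2))/d` at `μ = d/2`
once `A² ε ≥ 2`. Hence `λ_{p,A}/A < d` for all large `A`, and then
`H_A(λ_{p,A} p)/A² = H(μp) ≤ μ² + Mμ` is small as well.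
-/

/-- The effective burning velocity associated with an effective Hamiltonian `H`:
`α(p) = inf_{λ > 0} (1 + H(λ p)) / λ`. -/
noncomputable def effAlpha {n : ℕ} (H : EuclideanSpace ℝ (Fin n) → ℝ)
    (p : EuclideanSpace ℝ (Fin n)) : ℝ :=
  sInf {y : ℝ | ∃ l : ℝ, 0 < l ∧ (1 + H (l • p)) / l = y}

open Set

lemma ConvexOn.comp_smul_right {E : Type*} [AddCommGroup E] [Module ℝ E] {H : E → ℝ}
    (hH : ConvexOn ℝ univ H) (v : E) : ConvexOn ℝ univ (fun t : ℝ => H (t • v)) :=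
  hH.comp_linearMap (LinearMap.toSpanSingleton ℝ E v)

lemma ConvexOn.affine_of_midpoint_affine {g : ℝ → ℝ} (hg : ConvexOn ℝ (Icc 0 1) g)
    (hmid : 2 * g (1 / 2) = g 0 + g 1) {s : ℝ} (hs : s ∈ Icc (0 : ℝ) 1) :
    g s = (1 - s) * g 0 + s * g 1 := by
  obtain ⟨hs0, hs1⟩ := hs
  refine le_antisymm ?_ ?_
  · simpa using hg.2 (left_mem_Icc.2 zero_le_one) (right_mem_Icc.2 zero_le_one)
      (sub_nonneg.2 hs1) hs0 (by ring)
  rcases lt_trichotomy s (1 / 2) with hlt | rfl | hgt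
  · have := hg.slope_mono_adjacent ⟨hs0, hs1⟩ (right_mem_Icc.2 zero_le_one) hlt (by norm_num)
    rw [div_le_div_iff₀ (by linarith) (by norm_num)] at this
    linear_combination 2 * this + (s - 1) * hmid
  · linarith
  · have := hg.slope_mono_adjacent (left_mem_Icc.2 zero_le_one) ⟨hs0, hs1⟩ (by norm_num) hgt
    rw [div_le_div_iff₀ (by norm_num) (by linarith)] at this
    linear_combination 2 * this - s * hmid

lemma ConvexOn.div_le_div_of_map_zero {g : ℝ → ℝ} (hg : ConvexOn ℝ (Ici 0) g) (h0 : g 0 = 0)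
    {a b : ℝ} (ha : 0 < a) (hab : a ≤ b) : g a / a ≤ g b / b := by
  simpa [h0] using hg.secant_mono self_mem_Ici ha.le (ha.le.trans hab) ha.ne'
    (ha.trans_le hab).ne' hab

lemma ConvexOn.one_add_div_half_lt {g : ℝ → ℝ} (hg : ConvexOn ℝ (Ici 0) g) (h0 : g 0 = 0)
    {D l : ℝ} (hD : 0 < D) (hDl : D ≤ l) (hgap : 2 ≤ g D - 2 * g (D / 2)) :
    (1 + g (D / 2)) / (D / 2) < (1 + g l) / l := by
  have hl : 0 < l := hD.trans_le hDl
  have hslope : g D / D ≤ g l / l := hg.div_le_div_of_map_zero h0 hD hDl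
  have hhalf : (1 + g (D / 2)) / (D / 2) ≤ g D / D := by
    rw [div_le_div_iff₀ (by positivity) hD]
    nlinarith
  calc (1 + g (D / 2)) / (D / 2) ≤ g l / l := hhalf.trans hslope
    _ < (1 + g l) / l := div_lt_div_of_pos_right (lt_one_add _) hl

section Radial

variable {n : ℕ} {H : EuclideanSpace ℝ (Fin n) → ℝ}

lemma RadStrictConvex.two_mul_half_smul_lt (hrad : RadStrictConvex H)
    (hconv : ConvexOn ℝ univ H) (h0 : H 0 = 0) {v : EuclideanSpace ℝ (Fin n)} (hv : 0 < H v) :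
    2 * H ((1 / 2 : ℝ) • v) < H v := by
  have hle : H ((1 / 2 : ℝ) • v) ≤ 1 / 2 * H v := by
    simpa [h0] using hconv.2 (mem_univ v) (mem_univ 0) (by norm_num : (0 : ℝ) ≤ 1 / 2)
      (by norm_num : (0 : ℝ) ≤ 1 / 2) (by norm_num)
  refine lt_of_le_of_ne (by linarith) fun hmid => ?_
  have hray : ConvexOn ℝ (Icc 0 1) (fun t : ℝ => H (t • v)) :=
    (hconv.comp_smul_right v).subset (subset_univ _) (convex_Icc 0 1)
  have haffine : ∀ s ∈ Icc (0 : ℝ) 1,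
      H ((1 - s) • (0 : EuclideanSpace ℝ (Fin n)) + s • v) = (1 - s) * H 0 + s * H v := by
    intro s hs
    simpa using hray.affine_of_midpoint_affine (by simpa [h0] using hmid) hs
  have := hrad 0 v haffine hv 0 (left_mem_Icc.2 zero_le_one)
  simp only [sub_zero, one_smul, zero_smul, add_zero, h0] at this
  exact hv.ne this

lemma RadStrictConvex.exists_pos_le_sub_two_mul (hrad : RadStrictConvex H)
    (hconv : ConvexOn ℝ univ H) (h0 : H 0 = 0) (hpos : ∀ p, p ≠ 0 → 0 < H p) {d : ℝ}
    (hd : 0 < d) : ∃ ε > 0, ∀ p, ‖p‖ = 1 → ε ≤ H (d • p) - 2 * H ((d / 2) • p) := by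
  have hcont : Continuous H := continuousOn_univ.1 (hconv.continuousOn isOpen_univ)
  obtain ⟨ε, hε, hle⟩ := (isCompact_sphere (0 : EuclideanSpace ℝ (Fin n)) 1).exists_forall_le'
    (f := fun p => H (d • p) - 2 * H ((d / 2) • p)) (by fun_prop) (a := 0) fun p hp => by
      have hp : ‖p‖ = 1 := mem_sphere_zero_iff_norm.1 hp
      have hdp : d • p ≠ 0 := smul_ne_zero hd.ne' (norm_ne_zero_iff.1 (by simp [hp]))
      have := hrad.two_mul_half_smul_lt hconv h0 (hpos _ hdp)
      rw [smul_smul, one_div_mul_eq_div] at this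
      exact sub_pos.2 this
  exact ⟨ε, hε, fun p hp => hle p (mem_sphere_zero_iff_norm.2 hp)⟩

end Radial

lemma effAlpha_le {n : ℕ} {H : EuclideanSpace ℝ (Fin n) → ℝ} (hH : ∀ q, 0 ≤ H q)
    (p : EuclideanSpace ℝ (Fin n)) {l : ℝ} (hl : 0 < l) : effAlpha H p ≤ (1 + H (l • p)) / l :=
  csInf_le ⟨0, by rintro _ ⟨l', hl', rfl⟩; have := hH (l' • p); positivity⟩ ⟨l, hl, rfl⟩

lemma exists_lam_lt_mul {n : ℕ} {H : EuclideanSpace ℝ (Fin n) → ℝ}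
    (hconv : ConvexOn ℝ univ H) (h0 : H 0 = 0) (hpos : ∀ p, p ≠ 0 → 0 < H p)
    (hrad : RadStrictConvex H) (lam : ℝ → EuclideanSpace ℝ (Fin n) → ℝ)
    (hlam : ∀ A : ℝ, 1 ≤ A → ∀ p : EuclideanSpace ℝ (Fin n), ‖p‖ = 1 →
      0 < lam A p ∧
        (1 + A ^ 2 * H (A⁻¹ • (lam A p • p))) / lam A p
          = effAlpha (fun q => A ^ 2 * H (A⁻¹ • q)) p)
    {d : ℝ} (hd : 0 < d) :
    ∃ A₀ ≥ 1, ∀ A ≥ A₀, ∀ p : EuclideanSpace ℝ (Fin n), ‖p‖ = 1 → lam A p < A * d := by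
  obtain ⟨ε, hε, hgap⟩ := hrad.exists_pos_le_sub_two_mul hconv h0 hpos hd
  refine ⟨max 1 (2 / ε), le_max_left _ _, fun A hA p hp => ?_⟩
  have hA1 : 1 ≤ A := (le_max_left _ _).trans hA
  have hA0 : 0 < A := one_pos.trans_le hA1
  have hAε : 2 ≤ A ^ 2 * ε := by
    have : 2 / ε ≤ A ^ 2 := ((le_max_right _ _).trans hA).trans (by nlinarith)
    rwa [div_le_iff₀ hε] at this
  have hnonneg : ∀ q, 0 ≤ H q := fun q => by
    rcases eq_or_ne q 0 with rfl | hq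
    exacts [h0.ge, (hpos q hq).le]
  obtain ⟨hl, hmin⟩ := hlam A hA1 p hp
  set G : ℝ → ℝ := fun t => A ^ 2 * H (t • (A⁻¹ • p)) with hG
  have hGconv : ConvexOn ℝ (Ici 0) G :=
    ((hconv.comp_smul_right _).smul (sq_nonneg A)).subset (subset_univ _) (convex_Ici 0)
  have hGapply : ∀ t, G t = A ^ 2 * H (A⁻¹ • (t • p)) := fun t => by rw [hG, smul_comm]
  have hGmul : ∀ t, G (A * t) = A ^ 2 * H (t • p) := fun t => by
    rw [hGapply, smul_smul, inv_mul_cancel_left₀ hA0.ne']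
  have hquot : (1 + G (lam A p)) / lam A p ≤ (1 + G (A * d / 2)) / (A * d / 2) := by
    rw [hGapply, hmin, hGapply]
    exact effAlpha_le (fun q => mul_nonneg (sq_nonneg A) (hnonneg _)) p (by positivity)
  have hGgap : 2 ≤ G (A * d) - 2 * G (A * d / 2) := by
    rw [mul_div_assoc, hGmul, hGmul]
    linarith [mul_le_mul_of_nonneg_left (hgap p hp) (sq_nonneg A)]
  by_contra! hle
  have hG0 : G 0 = 0 := by simp [hG, h0]
  exact (hquot.trans_lt (hGconv.one_add_div_half_lt hG0 (by positivity) hle hGgap)).false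

theorem statement19_general {n : ℕ} (M : ℝ)
    (H : EuclideanSpace ℝ (Fin n) → ℝ) (hconv : ConvexOn ℝ Set.univ H)
    (h0 : H 0 = 0)
    (hbounds : ∀ p, ‖p‖ ^ 2 ≤ H p ∧ H p ≤ ‖p‖ ^ 2 + M * ‖p‖)
    (hrad : RadStrictConvex H)
    (lam : ℝ → EuclideanSpace ℝ (Fin n) → ℝ)
    (hlam : ∀ A : ℝ, 1 ≤ A → ∀ p : EuclideanSpace ℝ (Fin n), ‖p‖ = 1 →
      0 < lam A p ∧
        (1 + A ^ 2 * H (A⁻¹ • (lam A p • p))) / lam A p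
          = effAlpha (fun q => A ^ 2 * H (A⁻¹ • q)) p) :
    ∀ δ > (0:ℝ), ∃ A₀ : ℝ, 1 ≤ A₀ ∧ ∀ A : ℝ, A₀ ≤ A →
      ∀ p : EuclideanSpace ℝ (Fin n), ‖p‖ = 1 →
        lam A p / A < δ ∧ (A ^ 2 * H (A⁻¹ • (lam A p • p))) / A ^ 2 < δ := by
  intro δ hδ
  have hM : 0 < 1 + |M| := by positivity
  set d := min 1 (δ / (1 + |M|))
  have hd : 0 < d := lt_min one_pos (by positivity)
  have hdM : d * (1 + |M|) ≤ δ := (le_div_iff₀ hM).1 (min_le_right _ _)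
  have hpos : ∀ p, p ≠ 0 → 0 < H p := fun p hp =>
    (pow_pos (norm_pos_iff.2 hp) 2).trans_le (hbounds p).1
  obtain ⟨A₀, hA₀, hlt⟩ := exists_lam_lt_mul hconv h0 hpos hrad lam hlam hd
  refine ⟨A₀, hA₀, fun A hA p hp => ?_⟩
  have hA0 : 0 < A := one_pos.trans_le (hA₀.trans hA)
  set μ := lam A p / A
  have hμ0 : 0 < μ := div_pos (hlam A (hA₀.trans hA) p hp).1 hA0
  have hμd : μ < d := (div_lt_iff₀' hA0).2 (hlt A hA p hp)
  have hHμ : H (μ • p) ≤ μ ^ 2 + M * μ := by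
    simpa [norm_smul, hp, abs_of_pos hμ0] using (hbounds (μ • p)).2
  rw [smul_smul, mul_div_cancel_left₀ _ (pow_ne_zero 2 hA0.ne'), inv_mul_eq_div]
  have hμ1 : μ < 1 := hμd.trans_le (min_le_left _ _)
  constructor
  · nlinarith [abs_nonneg M]
  · calc H (μ • p) ≤ μ ^ 2 + M * μ := hHμ
      _ ≤ μ * (1 + |M|) := by nlinarith [le_abs_self M]
      _ < d * (1 + |M|) := mul_lt_mul_of_pos_right hμd hM
      _ ≤ δ := hdM

/-- Let `H` be convex with `H(0) = 0`, `|p|² ≤ H(p) ≤ |p|² + M|p|`,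
radially strictly convex; for `A ≥ 1` set `H_A(q) = A² H(q/A)` and let `λ_{p,A} > 0`
be the minimizer of `λ ↦ (1 + H_A(λ p))/λ` for each unit vector `p`.  Then
`sup_{|p|=1} λ_{p,A}/A → 0` and `sup_{|p|=1} H_A(λ_{p,A} p)/A² → 0` as `A → ∞`. -/
theorem statement19 {n : ℕ} (hn : 1 ≤ n) (M : ℝ) (hM : 0 ≤ M)
    (H : EuclideanSpace ℝ (Fin n) → ℝ) (hconv : ConvexOn ℝ Set.univ H)
    (h0 : H 0 = 0)
    (hbounds : ∀ p, ‖p‖ ^ 2 ≤ H p ∧ H p ≤ ‖p‖ ^ 2 + M * ‖p‖)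
    (hrad : RadStrictConvex H)
    (lam : ℝ → EuclideanSpace ℝ (Fin n) → ℝ)
    (hlam : ∀ A : ℝ, 1 ≤ A → ∀ p : EuclideanSpace ℝ (Fin n), ‖p‖ = 1 →
      0 < lam A p ∧
        (1 + A ^ 2 * H (A⁻¹ • (lam A p • p))) / lam A p
          = effAlpha (fun q => A ^ 2 * H (A⁻¹ • q)) p) :
    ∀ δ > (0:ℝ), ∃ A₀ : ℝ, 1 ≤ A₀ ∧ ∀ A : ℝ, A₀ ≤ A →
      ∀ p : EuclideanSpace ℝ (Fin n), ‖p‖ = 1 →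
        lam A p / A < δ ∧ (A ^ 2 * H (A⁻¹ • (lam A p • p))) / A ^ 2 < δ :=
  statement19_general M H hconv h0 hbounds hrad lam hlam
end
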